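/- Let G = (√5+1)/2 and α_* = (−G + 1 + √(G² + 2G + 5))/2. Then for 1 ≤ α ≤ G: min{ 1 + (2−G)(α−2), 1 + (1−α)/α } ≥ 2(√5 − 2), and moreover 1 + min{(2−G)(α−2), (1−α)/α} = 1/α_* − 1 when the minimum is attained appropriately; in particular the constant C_α = min over (x,y) ∈ Ω_α of (1+xy) satisfies C_α ≥ 2(√5−2) > 0 for all α ∈ [(√5−1)/2, G]. -/

import Mathlib

/-!
Write φ for the golden ratio `G`, so that `φ² = φ + 1`, `(√5 - 1)/2 = φ - 1 = 1/φ` and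
`2(√5 - 2) = 4φ - 6`. Each of the three pieces of `Ω_α` lies in a rectangle `[a, α) × [0, b]`,
on which `1 + xy ≥ min (1 + a b) 1`, i.e. `1 + xy` is at least its value at a corner.
These corner values are affine in `α` or `1/α` resp. `1/(2 - α)`, hence monotone, and at the
extreme parameters `α = φ - 1` resp. `α = φ` they reduce to polynomial inequalities in `φ`;
the first one, `1 + (2 - φ)(α - 2)` at `α = φ - 1`, equals `4φ - 6` exactly.
The point `α_*` is the positive root of `X² + (φ - 1)X - (φ + 1)`, which is exactly the
condition that the two branches `1 + (2 - φ)(α - 2)` and `1/α` cross there.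
-/

open Real goldenRatio Set

/-- The natural extension domain Ω_α of the α-OCF Gauss map,
Ω_α = I_α×[0,2−G) ∪ (φ_α(α),α)×(2−G,1] ∪ [φ_α(α−2),α)×[1,G),
with φ_α(α) = 1/α − 1 and φ_α(α−2) = 1/(2−α) − 1. -/
noncomputable def Omega (α : ℝ) : Set (ℝ × ℝ) :=
  let G : ℝ := (Real.sqrt 5 + 1)/2
  (Set.Ico (α-2) α ×ˢ Set.Ico 0 (2-G)) ∪
  (Set.Ioo (1/α - 1) α ×ˢ Set.Ioc (2-G) 1) ∪
  (Set.Ico (1/(2-α) - 1) α ×ˢ Set.Ico 1 G)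

lemma goldenRatio_eq_sqrt_five_add_one_div_two : φ = (√5 + 1) / 2 := by
  rw [goldenRatio, add_comm]

lemma two_mul_sqrt_five_sub_two_eq : 2 * (√5 - 2) = 4 * φ - 6 := by
  rw [goldenRatio]; ring

lemma sqrt_five_sub_one_div_two_eq : (√5 - 1) / 2 = φ - 1 := by
  rw [goldenRatio]; ring

lemma goldenRatio_lt_thirteen_div_eight : φ < 13 / 8 := by
  have h : √5 < 9 / 4 := by
    rw [sqrt_lt' (by norm_num)]; norm_num
  rw [goldenRatio]; linarith

lemma le_one_add_mul_of_le_corner {c a b x y : ℝ} (hc₁ : c ≤ 1) (hc : c ≤ 1 + a * b)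
    (hx : a ≤ x) (hy₀ : 0 ≤ y) (hy : y ≤ b) : c ≤ 1 + x * y := by
  rcases le_or_gt 0 x with hx₀ | hx₀
  · linarith [mul_nonneg hx₀ hy₀]
  · calc c ≤ 1 + a * b := hc
      _ ≤ 1 + x * b := by gcongr; exact hy₀.trans hy
      _ ≤ 1 + x * y := by linarith [mul_le_mul_of_nonpos_left hy hx₀.le]

lemma le_one_add_two_sub_goldenRatio_mul {α : ℝ} (hα : φ - 1 ≤ α) :
    4 * φ - 6 ≤ 1 + (2 - φ) * (α - 2) := by
  nlinarith [goldenRatio_sq, goldenRatio_lt_two]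

lemma le_one_div_of_le_goldenRatio {α : ℝ} (hα₀ : 0 < α) (hα : α ≤ φ) : 4 * φ - 6 ≤ 1 / α := by
  have h : φ⁻¹ ≤ 1 / α := by
    rw [one_div]; exact inv_anti₀ hα₀ hα
  rw [inv_goldenRatio, ← one_sub_goldenConj] at h
  linarith [goldenRatio_lt_thirteen_div_eight]

lemma le_one_add_one_div_two_sub_sub_one_mul {α : ℝ} (hα : φ - 1 ≤ α) (hα₂ : α < 2) :
    4 * φ - 6 ≤ 1 + (1 / (2 - α) - 1) * φ := by
  have h₂ : 0 < 2 - α := by linarith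
  have h : 1 + (1 / (2 - α) - 1) * φ = ((2 - α) + (α - 1) * φ) / (2 - α) := by
    field_simp; ring
  rw [h, le_div_iff₀ h₂]
  nlinarith [goldenRatio_sq, goldenRatio_lt_thirteen_div_eight, one_lt_goldenRatio]

lemma Omega_eq (α : ℝ) : Omega α =
    (Ico (α - 2) α ×ˢ Ico 0 (2 - φ)) ∪ (Ioo (1 / α - 1) α ×ˢ Ioc (2 - φ) 1) ∪
      (Ico (1 / (2 - α) - 1) α ×ˢ Ico 1 φ) := by
  rw [Omega, goldenRatio_eq_sqrt_five_add_one_div_two]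

lemma le_one_add_mul_of_mem_Omega {α : ℝ} (hα₁ : φ - 1 ≤ α) (hα₂ : α ≤ φ) {p : ℝ × ℝ}
    (hp : p ∈ Omega α) : 4 * φ - 6 ≤ 1 + p.1 * p.2 := by
  have hα₀ : 0 < α := by linarith [one_lt_goldenRatio]
  have hone : 4 * φ - 6 ≤ 1 := by linarith [goldenRatio_lt_thirteen_div_eight]
  rw [Omega_eq] at hp
  rcases hp with (⟨⟨hx, -⟩, hy₀, hy⟩ | ⟨⟨hx, -⟩, hy₀, hy⟩) | ⟨⟨hx, -⟩, hy₀, hy⟩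
  · exact le_one_add_mul_of_le_corner hone
      (by linarith [le_one_add_two_sub_goldenRatio_mul hα₁]) hx hy₀ hy.le
  · refine le_one_add_mul_of_le_corner hone ?_ hx.le (by linarith [goldenRatio_lt_two]) hy
    linarith [le_one_div_of_le_goldenRatio hα₀ hα₂]
  · exact le_one_add_mul_of_le_corner hone
      (le_one_add_one_div_two_sub_sub_one_mul hα₁ (hα₂.trans_lt goldenRatio_lt_two))
      hx (by linarith) hy.le

lemma one_add_two_sub_goldenRatio_mul_eq_one_div {a : ℝ} (ha₀ : a ≠ 0)
    (ha : a * a + (φ - 1) * a = φ + 1) : 1 + (2 - φ) * (a - 2) = 1 / a := by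
  rw [eq_div_iff ha₀]
  linear_combination (2 - φ) * ha + (a - 1) * goldenRatio_sq

lemma one_add_one_sub_div_eq_one_div {a : ℝ} (ha : a ≠ 0) : 1 + (1 - a) / a = 1 / a := by
  field_simp; ring

/-- With G = (√5+1)/2 and α_* = (−G+1+√(G²+2G+5))/2: for 1 ≤ α ≤ G one has
min{1+(2−G)(α−2), 1+(1−α)/α} ≥ 2(√5−2); at α_* the two branches agree and
equal 1/α_*; and for every α ∈ [g,G] the constant
C_α = min_{(x,y)∈Ω_α} (1+xy) satisfies C_α ≥ 2(√5−2) > 0, i.e.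
1 + xy ≥ 2(√5−2) > 0 for all (x,y) ∈ Ω_α. -/
theorem stmt19 (G αs : ℝ) (hG : G = (Real.sqrt 5 + 1)/2)
    (hαs : αs = (-G + 1 + Real.sqrt (G^2 + 2*G + 5))/2) :
    (∀ α : ℝ, 1 ≤ α → α ≤ G →
      2*(Real.sqrt 5 - 2) ≤ min (1 + (2-G)*(α-2)) (1 + (1-α)/α)) ∧
    (1 + (2-G)*(αs-2) = 1/αs ∧ 1 + (1-αs)/αs = 1/αs) ∧
    (∀ α : ℝ, (Real.sqrt 5 - 1)/2 ≤ α → α ≤ G →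
      ∀ p ∈ Omega α, 2*(Real.sqrt 5 - 2) ≤ 1 + p.1 * p.2) ∧
    (0:ℝ) < 2*(Real.sqrt 5 - 2) := by
  rw [← goldenRatio_eq_sqrt_five_add_one_div_two] at hG
  subst hG
  have hroot : αs * αs + (φ - 1) * αs = φ + 1 := by
    have hdisc : discrim 1 (φ - 1) (-(φ + 1)) = √(φ ^ 2 + 2 * φ + 5) * √(φ ^ 2 + 2 * φ + 5) := by
      rw [mul_self_sqrt (by positivity), discrim]; ring
    have h := (quadratic_eq_zero_iff one_ne_zero hdisc αs).2 (Or.inl (by rw [hαs]; ring))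
    linarith
  have hαs₀ : αs ≠ 0 := by
    rintro rfl
    linarith [goldenRatio_pos]
  rw [two_mul_sqrt_five_sub_two_eq, sqrt_five_sub_one_div_two_eq]
  refine ⟨fun α hα₁ hα₂ => ?_, ⟨one_add_two_sub_goldenRatio_mul_eq_one_div hαs₀ hroot,
    one_add_one_sub_div_eq_one_div hαs₀⟩, fun α hα₁ hα₂ p hp => ?_, ?_⟩
  · have hα₀ : 0 < α := by linarith
    rw [one_add_one_sub_div_eq_one_div hα₀.ne']
    exact le_min (le_one_add_two_sub_goldenRatio_mul (by linarith [goldenRatio_lt_two]))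
      (le_one_div_of_le_goldenRatio hα₀ hα₂)
  · exact le_one_add_mul_of_mem_Omega hα₁ hα₂ hp
  · nlinarith [goldenRatio_sq, one_lt_goldenRatio]
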